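/- Let C be the presented group on three generators a, b, t with the two relators t⁻¹·a·t·a⁻¹·b⁻¹ and t⁻¹·b·t·a⁻¹·b⁻¹·b⁻¹ (encoding t⁻¹at = ba and t⁻¹bt = bba), and let F be the presented group on two generators x, y with the single relator x⁻¹·y⁻¹·y⁻¹·y⁻¹·x⁻¹·y·x·x·y. Then C and F are isomorphic as groups. -/
import Mathlib


/-- Relators for the mapping-torus presentation on generators
`a = of 0`, `b = of 1`, `t = of 2`: the relators
`t⁻¹·a·t·a⁻¹·b⁻¹` and `t⁻¹·b·t·a⁻¹·b⁻¹·b⁻¹`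
(encoding `t⁻¹at = ba` and `t⁻¹bt = bba`). -/
def relsC : Set (FreeGroup (Fin 3)) :=
  let a := FreeGroup.of 0
  let b := FreeGroup.of 1
  let t := FreeGroup.of 2
  {t⁻¹ * a * t * a⁻¹ * b⁻¹, t⁻¹ * b * t * a⁻¹ * b⁻¹ * b⁻¹}

/-- Relator for SnapPea's presentation on generators `x = of 0`, `y = of 1`:
`x⁻¹·y⁻¹·y⁻¹·y⁻¹·x⁻¹·y·x·x·y`. -/
def relF : FreeGroup (Fin 2) :=
  let x := FreeGroup.of 0
  let y := FreeGroup.of 1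
  x⁻¹ * y⁻¹ * y⁻¹ * y⁻¹ * x⁻¹ * y * x * x * y

namespace Stmt5Aux

/-- First relator of `relsC`. -/
def r1w : FreeGroup (Fin 3) :=
  (FreeGroup.of 2)⁻¹ * FreeGroup.of 0 * FreeGroup.of 2 * (FreeGroup.of 0)⁻¹ *
    (FreeGroup.of 1)⁻¹

/-- Second relator of `relsC`. -/
def r2w : FreeGroup (Fin 3) :=
  (FreeGroup.of 2)⁻¹ * FreeGroup.of 1 * FreeGroup.of 2 * (FreeGroup.of 0)⁻¹ *
    (FreeGroup.of 1)⁻¹ * (FreeGroup.of 1)⁻¹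

theorem r1w_mem : r1w ∈ relsC := Set.mem_insert _ _

theorem r2w_mem : r2w ∈ relsC := Set.mem_insert_of_mem _ rfl

/-- The word map for the homomorphism `C → F`: `a ↦ y⁻¹`, `b ↦ x⁻¹y⁻¹xy`, `t ↦ yx`. -/
def fwdf : Fin 3 → FreeGroup (Fin 2) := fun i =>
  if i = 0 then (FreeGroup.of 1)⁻¹
  else if i = 1 then (FreeGroup.of 0)⁻¹ * (FreeGroup.of 1)⁻¹ * FreeGroup.of 0 * FreeGroup.of 1
  else FreeGroup.of 1 * FreeGroup.of 0

/-- The word map for the homomorphism `F → C`: `x ↦ a·t`, `y ↦ a⁻¹`. -/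
def bwdf : Fin 2 → FreeGroup (Fin 3) := fun j =>
  if j = 0 then FreeGroup.of 0 * FreeGroup.of 2
  else (FreeGroup.of 0)⁻¹

theorem fwdf0 : fwdf 0 = (FreeGroup.of 1)⁻¹ := rfl
theorem fwdf1 : fwdf 1 =
    (FreeGroup.of 0)⁻¹ * (FreeGroup.of 1)⁻¹ * FreeGroup.of 0 * FreeGroup.of 1 := rfl
theorem fwdf2 : fwdf 2 = FreeGroup.of 1 * FreeGroup.of 0 := rfl
theorem bwdf0 : bwdf 0 = FreeGroup.of 0 * FreeGroup.of 2 := rfl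
theorem bwdf1 : bwdf 1 = (FreeGroup.of 0)⁻¹ := rfl

/-- conjugators for the normal-closure decomposition of `FreeGroup.lift bwdf relF`. -/
def c1 : FreeGroup (Fin 3) :=
  (FreeGroup.of 2)⁻¹ * FreeGroup.of 0 * FreeGroup.of 0 * (FreeGroup.of 2)⁻¹ *
    (FreeGroup.of 0)⁻¹ * FreeGroup.of 2
def c2 : FreeGroup (Fin 3) :=
  (FreeGroup.of 2)⁻¹ * FreeGroup.of 0 * (FreeGroup.of 1)⁻¹ * FreeGroup.of 0 *
    FreeGroup.of 2 * (FreeGroup.of 0)⁻¹ * (FreeGroup.of 1)⁻¹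
def c3 : FreeGroup (Fin 3) :=
  (FreeGroup.of 2)⁻¹ * FreeGroup.of 0 * (FreeGroup.of 1)⁻¹ * FreeGroup.of 2

/-- conjugator for the normal-closure decomposition of `FreeGroup.lift fwdf r2w`. -/
def cF : FreeGroup (Fin 2) :=
  (FreeGroup.of 0)⁻¹ * (FreeGroup.of 1)⁻¹ * (FreeGroup.of 0)⁻¹ * (FreeGroup.of 1)⁻¹ *
    FreeGroup.of 0 * FreeGroup.of 1 * FreeGroup.of 1 * FreeGroup.of 1 * FreeGroup.of 0

theorem mk_eq_one {α : Type*} {rels : Set (FreeGroup α)} {w : FreeGroup α}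
    (h : w ∈ Subgroup.normalClosure rels) : PresentedGroup.mk rels w = 1 :=
  (QuotientGroup.eq_one_iff w).mpr h

theorem mk_eq {α : Type*} {rels : Set (FreeGroup α)} {w v : FreeGroup α}
    (h : w * v⁻¹ ∈ Subgroup.normalClosure rels) :
    PresentedGroup.mk rels w = PresentedGroup.mk rels v := by
  have h1 : PresentedGroup.mk rels (w * v⁻¹) = 1 := mk_eq_one h
  rw [map_mul, map_inv] at h1
  exact mul_inv_eq_one.mp h1

theorem conj_mem' {α : Type*} {rels : Set (FreeGroup α)} {r : FreeGroup α}
    (hr : r ∈ Subgroup.normalClosure rels) (c : FreeGroup α) :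
    c * r * c⁻¹ ∈ Subgroup.normalClosure rels :=
  Subgroup.Normal.conj_mem Subgroup.normalClosure_normal r hr c

-- key free-group word identities, verified by `decide`
set_option maxHeartbeats 2000000 in
theorem keyF : FreeGroup.lift bwdf relF =
    c1 * r1w⁻¹ * c1⁻¹ * (c2 * r1w * c2⁻¹) * (c3 * r2w⁻¹ * c3⁻¹) * r1w := by
  simp only [relF, map_mul, map_inv, FreeGroup.lift_apply_of, bwdf0, bwdf1]
  decide

theorem keyC1 : FreeGroup.lift fwdf r1w = 1 := by
  simp only [r1w, map_mul, map_inv, FreeGroup.lift_apply_of, fwdf0, fwdf1, fwdf2]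
  decide

theorem keyC2 : FreeGroup.lift fwdf r2w = cF * relF⁻¹ * cF⁻¹ := by
  simp only [r2w, map_mul, map_inv, FreeGroup.lift_apply_of, fwdf0, fwdf1, fwdf2]
  decide

theorem lift_mk {α β : Type*} {rels : Set (FreeGroup β)} (g : α → FreeGroup β) :
    FreeGroup.lift (fun i => PresentedGroup.mk rels (g i)) =
      (PresentedGroup.mk rels).comp (FreeGroup.lift g) := by
  apply FreeGroup.ext_hom
  intro a
  simp [FreeGroup.lift_apply_of]

set_option maxHeartbeats 1000000 in
theorem hfwd : ∀ r ∈ relsC,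
    FreeGroup.lift (fun i => PresentedGroup.mk ({relF} : Set (FreeGroup (Fin 2))) (fwdf i)) r
      = 1 := by
  intro r hr
  rw [lift_mk, MonoidHom.comp_apply]
  apply mk_eq_one
  have hr' : r = r1w ∨ r = r2w := by
    simpa only [relsC, Set.mem_insert_iff, Set.mem_singleton_iff, r1w, r2w] using hr
  rcases hr' with rfl | rfl
  · rw [keyC1]; exact one_mem _
  · rw [keyC2]
    exact conj_mem' (inv_mem (Subgroup.subset_normalClosure (Set.mem_singleton relF))) cF

theorem hbwd : ∀ r ∈ ({relF} : Set (FreeGroup (Fin 2))),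
    FreeGroup.lift (fun j => PresentedGroup.mk relsC (bwdf j)) r = 1 := by
  intro r hr
  rw [Set.mem_singleton_iff] at hr
  subst hr
  rw [lift_mk, MonoidHom.comp_apply]
  apply mk_eq_one
  rw [keyF]
  have m1 : r1w ∈ Subgroup.normalClosure relsC := Subgroup.subset_normalClosure r1w_mem
  have m2 : r2w ∈ Subgroup.normalClosure relsC := Subgroup.subset_normalClosure r2w_mem
  exact mul_mem (mul_mem (mul_mem (conj_mem' (inv_mem m1) c1) (conj_mem' m1 c2))
    (conj_mem' (inv_mem m2) c3)) m1

/-- The homomorphism `C → F`. -/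
noncomputable def fwd : PresentedGroup relsC →*
    PresentedGroup ({relF} : Set (FreeGroup (Fin 2))) :=
  PresentedGroup.toGroup hfwd

/-- The homomorphism `F → C`. -/
noncomputable def bwd : PresentedGroup ({relF} : Set (FreeGroup (Fin 2))) →*
    PresentedGroup relsC :=
  PresentedGroup.toGroup hbwd

theorem fwd_mk (w : FreeGroup (Fin 3)) :
    fwd (PresentedGroup.mk relsC w) =
      PresentedGroup.mk ({relF} : Set (FreeGroup (Fin 2))) (FreeGroup.lift fwdf w) := by
  have : fwd.comp (PresentedGroup.mk relsC) =
      (PresentedGroup.mk ({relF} : Set (FreeGroup (Fin 2)))).comp (FreeGroup.lift fwdf) := by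
    apply FreeGroup.ext_hom
    intro a
    simp only [MonoidHom.comp_apply, FreeGroup.lift_apply_of]
    exact PresentedGroup.toGroup.of hfwd
  exact congrFun (congrArg (fun f => f.toFun) this) w

theorem bwd_mk (w : FreeGroup (Fin 2)) :
    bwd (PresentedGroup.mk ({relF} : Set (FreeGroup (Fin 2))) w) =
      PresentedGroup.mk relsC (FreeGroup.lift bwdf w) := by
  have : bwd.comp (PresentedGroup.mk ({relF} : Set (FreeGroup (Fin 2)))) =
      (PresentedGroup.mk relsC).comp (FreeGroup.lift bwdf) := by
    apply FreeGroup.ext_hom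
    intro a
    simp only [MonoidHom.comp_apply, FreeGroup.lift_apply_of]
    exact PresentedGroup.toGroup.of hbwd
  exact congrFun (congrArg (fun f => f.toFun) this) w

theorem bwd_fwd : bwd.comp fwd = MonoidHom.id _ := by
  ext i
  simp only [MonoidHom.comp_apply, MonoidHom.id_apply]
  have h1 : fwd (PresentedGroup.of i) =
      PresentedGroup.mk ({relF} : Set (FreeGroup (Fin 2))) (fwdf i) :=
    PresentedGroup.toGroup.of hfwd
  rw [h1, bwd_mk]
  show PresentedGroup.mk relsC _ = PresentedGroup.mk relsC (FreeGroup.of i)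
  apply mk_eq
  fin_cases i
  · show FreeGroup.lift bwdf (fwdf 0) * (FreeGroup.of (0 : Fin 3))⁻¹ ∈ _
    have : FreeGroup.lift bwdf (fwdf 0) * (FreeGroup.of (0 : Fin 3))⁻¹ = 1 := by
      simp only [fwdf0, map_mul, map_inv, FreeGroup.lift_apply_of, bwdf0, bwdf1]
      decide
    rw [this]; exact one_mem _
  · show FreeGroup.lift bwdf (fwdf 1) * (FreeGroup.of (1 : Fin 3))⁻¹ ∈ _
    have : FreeGroup.lift bwdf (fwdf 1) * (FreeGroup.of (1 : Fin 3))⁻¹ = r1w := by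
      simp only [fwdf1, map_mul, map_inv, FreeGroup.lift_apply_of, bwdf0, bwdf1, r1w]
      decide
    rw [this]; exact Subgroup.subset_normalClosure r1w_mem
  · show FreeGroup.lift bwdf (fwdf 2) * (FreeGroup.of (2 : Fin 3))⁻¹ ∈ _
    have : FreeGroup.lift bwdf (fwdf 2) * (FreeGroup.of (2 : Fin 3))⁻¹ = 1 := by
      simp only [fwdf2, map_mul, map_inv, FreeGroup.lift_apply_of, bwdf0, bwdf1]
      decide
    rw [this]; exact one_mem _

theorem fwd_bwd : fwd.comp bwd = MonoidHom.id _ := by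
  ext j
  simp only [MonoidHom.comp_apply, MonoidHom.id_apply]
  have h1 : bwd (PresentedGroup.of j) = PresentedGroup.mk relsC (bwdf j) :=
    PresentedGroup.toGroup.of hbwd
  rw [h1, fwd_mk]
  show PresentedGroup.mk _ _ = PresentedGroup.mk _ (FreeGroup.of j)
  apply mk_eq
  fin_cases j
  · show FreeGroup.lift fwdf (bwdf 0) * (FreeGroup.of (0 : Fin 2))⁻¹ ∈ _
    have : FreeGroup.lift fwdf (bwdf 0) * (FreeGroup.of (0 : Fin 2))⁻¹ = 1 := by
      simp only [bwdf0, map_mul, map_inv, FreeGroup.lift_apply_of, fwdf0, fwdf1, fwdf2]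
      decide
    rw [this]; exact one_mem _
  · show FreeGroup.lift fwdf (bwdf 1) * (FreeGroup.of (1 : Fin 2))⁻¹ ∈ _
    have : FreeGroup.lift fwdf (bwdf 1) * (FreeGroup.of (1 : Fin 2))⁻¹ = 1 := by
      simp only [bwdf1, map_mul, map_inv, FreeGroup.lift_apply_of, fwdf0, fwdf1, fwdf2]
      decide
    rw [this]; exact one_mem _

end Stmt5Aux

theorem stmt_5 :
    Nonempty (PresentedGroup relsC ≃*
      PresentedGroup ({relF} : Set (FreeGroup (Fin 2)))) :=
  ⟨MonoidHom.toMulEquiv Stmt5Aux.fwd Stmt5Aux.bwd Stmt5Aux.bwd_fwd Stmt5Aux.fwd_bwd⟩
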